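/- Given R > 0 and any tensor A ∈ ℝ^{I₁ × ⋯ × I_N}, the best orthogonal rank-R approximation problem min{‖A − B‖ : rank_⊥(B) ≤ R} attains its minimum; i.e., there exists B with rank_⊥(B) ≤ R minimizing ‖A − B‖ over this set. -/

import Mathlib

open scoped BigOperators

/-- The outer product of vectors `v n ∈ ℝ^{I n}`. -/
noncomputable def outer {N : ℕ} {I : Fin N → ℕ}
    (v : (n : Fin N) → EuclideanSpace ℝ (Fin (I n))) :
    EuclideanSpace ℝ ((n : Fin N) → Fin (I n)) :=
  (WithLp.equiv 2 _).symm (fun i => ∏ n, v n (i n))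

/-- The orthogonal rank. -/
noncomputable def orank {N : ℕ} {I : Fin N → ℕ}
    (A : EuclideanSpace ℝ ((n : Fin N) → Fin (I n))) : ℕ :=
  sInf {R : ℕ | ∃ v : Fin R → (n : Fin N) → EuclideanSpace ℝ (Fin (I n)),
    A = ∑ r, outer (v r) ∧
    ∀ s t : Fin R, s ≠ t → (inner ℝ (outer (v s)) (outer (v t)) : ℝ) = 0}


section Aux

variable {N : ℕ} {I : Fin N → ℕ}

lemma inner_outer (v w : (n : Fin N) → EuclideanSpace ℝ (Fin (I n))) :
    (inner ℝ (outer v) (outer w) : ℝ) = ∏ n, (inner ℝ (v n) (w n) : ℝ) := by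
  simp only [PiLp.inner_apply, RCLike.inner_apply, conj_trivial, outer,
    WithLp.equiv_symm_apply, PiLp.toLp_apply]
  rw [Fintype.prod_sum]
  congr 1; funext i
  rw [← Finset.prod_mul_distrib]

lemma norm_outer (v : (n : Fin N) → EuclideanSpace ℝ (Fin (I n))) :
    ‖outer v‖ = ∏ n, ‖v n‖ := by
  have h : ‖outer v‖ ^ 2 = (∏ n, ‖v n‖) ^ 2 := by
    rw [← real_inner_self_eq_norm_sq, inner_outer, ← Finset.prod_pow]
    exact Finset.prod_congr rfl fun n _ => (real_inner_self_eq_norm_sq (v n))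
  have h1 : (0:ℝ) ≤ ‖outer v‖ := norm_nonneg _
  have h2 : (0:ℝ) ≤ ∏ n, ‖v n‖ := Finset.prod_nonneg fun n _ => norm_nonneg _
  nlinarith

lemma outer_smul (c : Fin N → ℝ) (v : (n : Fin N) → EuclideanSpace ℝ (Fin (I n))) :
    outer (fun n => c n • v n) = (∏ n, c n) • outer v := by
  have : ((∏ n, c n) • outer v : EuclideanSpace ℝ ((n : Fin N) → Fin (I n)))
      = (WithLp.equiv 2 _).symm ((∏ n, c n) • (fun i => ∏ n, v n (i n))) := by
    simp [outer]
  rw [this, outer]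
  congr 1
  funext i
  simp [Finset.prod_mul_distrib]

lemma eq_zero_of_outer_comp
    (v : (n : Fin N) → EuclideanSpace ℝ (Fin (I n))) (n0 : Fin N) (h : v n0 = 0) :
    outer v = 0 := by
  have : ‖outer v‖ = 0 := by
    rw [norm_outer]
    exact Finset.prod_eq_zero (Finset.mem_univ n0) (by simp [h])
  simpa using this

lemma continuous_outer :
    Continuous fun v : (n : Fin N) → EuclideanSpace ℝ (Fin (I n)) => outer v := by
  unfold outer
  refine (PiLp.continuous_toLp 2 _).comp (continuous_pi fun i => ?_)
  exact continuous_finset_prod _ fun n _ =>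
    ((continuous_apply (i n)).comp ((PiLp.continuous_ofLp 2 _).comp (continuous_apply n)))

/-- Normalization: any rank-one tensor has a representation with all factor
norms bounded by `max 1 ‖outer u‖`. -/
lemma exists_normalized (hN : 0 < N) (u : (n : Fin N) → EuclideanSpace ℝ (Fin (I n))) :
    ∃ w : (n : Fin N) → EuclideanSpace ℝ (Fin (I n)),
      outer w = outer u ∧ ∀ n, ‖w n‖ ≤ max 1 ‖outer u‖ := by
  by_cases h0 : ∃ n, u n = 0
  · obtain ⟨n0, hn0⟩ := h0
    refine ⟨fun _ => 0, ?_, fun n => by simp⟩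
    rw [eq_zero_of_outer_comp u n0 hn0, eq_zero_of_outer_comp (fun _ => 0) ⟨0, hN⟩ rfl]
  · push_neg at h0
    set n0 : Fin N := ⟨0, hN⟩
    set c : Fin N → ℝ := fun n =>
      if n = n0 then ∏ m ∈ Finset.univ.erase n0, ‖u m‖ else ‖u n‖⁻¹ with hc
    have hprod : ∏ n, c n = 1 := by
      rw [← Finset.mul_prod_erase _ _ (Finset.mem_univ n0)]
      have : ∀ m ∈ Finset.univ.erase n0, c m = ‖u m‖⁻¹ := by
        intro m hm
        simp [hc, (Finset.mem_erase.mp hm).1]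
      have hcn0 : c n0 = ∏ m ∈ Finset.univ.erase n0, ‖u m‖ := if_pos rfl
      rw [Finset.prod_congr rfl this, hcn0, Finset.prod_inv_distrib]
      exact mul_inv_cancel₀ (Finset.prod_ne_zero_iff.mpr fun m _ =>
        norm_ne_zero_iff.mpr (h0 m))
    refine ⟨fun n => c n • u n, by rw [outer_smul, hprod, one_smul], fun n => ?_⟩
    rcases eq_or_ne n n0 with h | h
    · subst h
      have hcn0 : c n0 = ∏ m ∈ Finset.univ.erase n0, ‖u m‖ := if_pos rfl
      rw [norm_smul, hcn0]
      rw [Real.norm_eq_abs, abs_of_nonneg (Finset.prod_nonneg fun m _ => norm_nonneg _),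
        Finset.prod_erase_mul _ _ (Finset.mem_univ n0)]
      rw [← norm_outer]
      exact le_max_right _ _
    · have hcn : c n = ‖u n‖⁻¹ := if_neg h
      rw [norm_smul, hcn]
      rw [Real.norm_eq_abs, abs_of_nonneg (by positivity),
        inv_mul_cancel₀ (norm_ne_zero_iff.mpr (h0 n))]
      exact le_max_left _ _

lemma term_norm_le {R : ℕ} (v : Fin R → (n : Fin N) → EuclideanSpace ℝ (Fin (I n)))
    (horth : ∀ s t : Fin R, s ≠ t → (inner ℝ (outer (v s)) (outer (v t)) : ℝ) = 0)
    (s : Fin R) : ‖outer (v s)‖ ≤ ‖∑ r, outer (v r)‖ := by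
  have key : ‖∑ r, outer (v r)‖ ^ 2 = ∑ r, ‖outer (v r)‖ ^ 2 := by
    rw [← real_inner_self_eq_norm_sq, sum_inner]
    refine Finset.sum_congr rfl fun r _ => ?_
    rw [inner_sum, Finset.sum_eq_single r (fun t _ ht => horth r t (Ne.symm ht)) (by simp),
      real_inner_self_eq_norm_sq]
  have hle : ‖outer (v s)‖ ^ 2 ≤ ∑ r, ‖outer (v r)‖ ^ 2 :=
    Finset.single_le_sum (f := fun r => ‖outer (v r)‖ ^ 2)
      (fun r _ => sq_nonneg _) (Finset.mem_univ s)
  nlinarith [norm_nonneg (outer (v s)), norm_nonneg (∑ r, outer (v r))]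

lemma exists_decomp (hN : 0 < N) (A : EuclideanSpace ℝ ((n : Fin N) → Fin (I n))) :
    ∃ (R' : ℕ) (v : Fin R' → (n : Fin N) → EuclideanSpace ℝ (Fin (I n))),
      A = ∑ r, outer (v r) ∧
      ∀ s t : Fin R', s ≠ t → (inner ℝ (outer (v s)) (outer (v t)) : ℝ) = 0 := by
  set n0 : Fin N := ⟨0, hN⟩
  set R' := Fintype.card ((n : Fin N) → Fin (I n)) with hR'
  set e : Fin R' ≃ ((n : Fin N) → Fin (I n)) := (Fintype.equivFin _).symm with he
  set v : Fin R' → (n : Fin N) → EuclideanSpace ℝ (Fin (I n)) :=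
    fun r n => (if n = n0 then A (e r) else 1) • EuclideanSpace.single ((e r) n) (1:ℝ) with hv
  have houter : ∀ r, outer (v r) =
      A (e r) • outer (fun n => EuclideanSpace.single ((e r) n) (1:ℝ)) := by
    intro r
    rw [hv, outer_smul]
    congr 1
    rw [Finset.prod_ite_eq' Finset.univ n0 (fun _ => A (e r))]
    simp
  have hinner : ∀ r t : Fin R',
      (inner ℝ (outer fun n => EuclideanSpace.single ((e r) n) (1:ℝ))
             (outer fun n => EuclideanSpace.single ((e t) n) (1:ℝ)) : ℝ)
      = if e r = e t then 1 else 0 := by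
    intro r t
    rw [inner_outer]
    by_cases h : e r = e t
    · simp [h, EuclideanSpace.inner_single_left, EuclideanSpace.single_apply]
    · rw [if_neg h]
      obtain ⟨n, hn⟩ := Function.ne_iff.mp h
      refine Finset.prod_eq_zero (Finset.mem_univ n) ?_
      simp [EuclideanSpace.inner_single_left, EuclideanSpace.single_apply, Ne.symm hn]
  refine ⟨R', v, ?_, ?_⟩
  · ext i
    have happ : (∑ r, outer (v r)) i = ∑ r, (outer (v r)) i := by
      rw [WithLp.ofLp_sum]; exact Finset.sum_apply i _ _
    rw [happ]
    have : ∀ r, (outer (v r)) i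
        = A (e r) * ∏ n, (EuclideanSpace.single ((e r) n) (1:ℝ)) (i n) := by
      intro r
      rw [houter r]
      rfl
    rw [Finset.sum_congr rfl fun r _ => this r]
    rw [Fintype.sum_equiv e _ (fun j => A j * ∏ n, (EuclideanSpace.single (j n) (1:ℝ)) (i n))
      (fun r => rfl)]
    rw [Finset.sum_eq_single i ?_ ?_]
    · simp [EuclideanSpace.single_apply]
    · intro j _ hj
      obtain ⟨n, hn⟩ := Function.ne_iff.mp hj
      refine mul_eq_zero_of_right _ (Finset.prod_eq_zero (Finset.mem_univ n) ?_)
      simp [EuclideanSpace.single_apply, Ne.symm hn]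
    · simp
  · intro s t hst
    rw [houter s, houter t, real_inner_smul_left, real_inner_smul_right, hinner,
      if_neg (fun h => hst (e.injective h))]
    ring

lemma exists_decomp_exact (hN : 0 < N) {R : ℕ}
    (C : EuclideanSpace ℝ ((n : Fin N) → Fin (I n))) (hC : orank C ≤ R) :
    ∃ v : Fin R → (n : Fin N) → EuclideanSpace ℝ (Fin (I n)),
      C = ∑ r, outer (v r) ∧
      ∀ s t : Fin R, s ≠ t → (inner ℝ (outer (v s)) (outer (v t)) : ℝ) = 0 := by
  set S : Set ℕ := {R : ℕ | ∃ v : Fin R → (n : Fin N) → EuclideanSpace ℝ (Fin (I n)),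
    C = ∑ r, outer (v r) ∧
    ∀ s t : Fin R, s ≠ t → (inner ℝ (outer (v s)) (outer (v t)) : ℝ) = 0} with hS
  have hSne : S.Nonempty := by
    obtain ⟨R', v, hv1, hv2⟩ := exists_decomp hN C
    exact ⟨R', v, hv1, hv2⟩
  obtain ⟨R0, hmem, hR0⟩ : ∃ R0, R0 ∈ S ∧ R0 ≤ R := ⟨sInf S, Nat.sInf_mem hSne, hC⟩
  clear hC hSne
  obtain ⟨v0, hv01, hv02⟩ := hmem
  set v : Fin R → (n : Fin N) → EuclideanSpace ℝ (Fin (I n)) :=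
    fun r => if h : (r : ℕ) < R0 then v0 ⟨r, h⟩ else 0 with hv
  have hzero : ∀ r : Fin R, ¬ ((r : ℕ) < R0) → outer (v r) = 0 := by
    intro r hr
    rw [hv]
    simp only [dif_neg hr]
    exact eq_zero_of_outer_comp _ ⟨0, hN⟩ rfl
  refine ⟨v, ?_, ?_⟩
  · rw [hv01]
    rw [← Finset.sum_subset (Finset.subset_univ
        ((Finset.univ : Finset (Fin R0)).map (Fin.castLEEmb hR0)))
      (fun r _ hr => hzero r ?_)]
    · rw [Finset.sum_map]
      refine Finset.sum_congr rfl fun r0 _ => ?_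
      have : v ((Fin.castLEEmb hR0) r0) = v0 r0 := by
        rw [hv]
        simp only [dif_pos (show ((Fin.castLEEmb hR0 r0 : Fin R) : ℕ) < R0 from r0.isLt)]
        congr 1
      rw [this]
    · intro hlt
      exact hr (Finset.mem_map.mpr ⟨⟨(r : ℕ), hlt⟩, Finset.mem_univ _, by
        simp [Fin.castLEEmb]⟩)
  · intro s t hst
    by_cases hs : (s : ℕ) < R0
    · by_cases ht : (t : ℕ) < R0
      · have hvs : v s = v0 ⟨s, hs⟩ := by rw [hv]; simp only [dif_pos hs]
        have hvt : v t = v0 ⟨t, ht⟩ := by rw [hv]; simp only [dif_pos ht]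
        rw [hvs, hvt]
        exact hv02 _ _ (fun h => hst (Fin.ext (Fin.mk_eq_mk.mp h)))
      · rw [hzero t ht, inner_zero_right]
    · rw [hzero s hs, inner_zero_left]

end Aux

/-- The best orthogonal rank-`R` approximation problem always has a solution:
there is a tensor `B` with `orank B ≤ R` minimizing `‖A − B‖` over all tensors
of orthogonal rank at most `R`. -/
theorem exists_best_orank_approximation {N : ℕ} {I : Fin N → ℕ} (R : ℕ) (hR : 0 < R)
    (A : EuclideanSpace ℝ ((n : Fin N) → Fin (I n))) :
    ∃ B, orank B ≤ R ∧
      ∀ C, orank C ≤ R → ‖A - B‖ ≤ ‖A - C‖ := by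
  rcases Nat.eq_zero_or_pos N with hN | hN
  · -- degenerate case `N = 0`: every tensor has `orank ≤ 1 ≤ R`
    subst hN
    refine ⟨A, ?_, fun C _ => by simp⟩
    set S : Set ℕ := {R : ℕ | ∃ v : Fin R → (n : Fin 0) → EuclideanSpace ℝ (Fin (I n)),
      A = ∑ r, outer (v r) ∧
      ∀ s t : Fin R, s ≠ t → (inner ℝ (outer (v s)) (outer (v t)) : ℝ) = 0} with hS
    rcases Set.eq_empty_or_nonempty S with h | h
    · have : orank A = sInf S := rfl
      rw [this, h, Nat.sInf_empty]
      exact Nat.zero_le R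
    · obtain ⟨k, hk⟩ := h
      have hk1 : k ≤ 1 := by
        by_contra hk2
        push_neg at hk2
        obtain ⟨v, _, horth⟩ := hk
        have h01 : (⟨0, by omega⟩ : Fin k) ≠ ⟨1, by omega⟩ := by
          simp [Fin.ext_iff]
        have := horth _ _ h01
        rw [inner_outer] at this
        simp at this
      have : orank A ≤ k := Nat.sInf_le hk
      omega
  · -- main case `N > 0`
    set ρ : ℝ := 1 + 2 * ‖A‖ with hρ
    have hρ1 : (1:ℝ) ≤ ρ := by have := norm_nonneg A; rw [hρ]; linarith
    have hρ0 : (0:ℝ) ≤ ρ := by linarith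
    set D : Set (Fin R → (n : Fin N) → EuclideanSpace ℝ (Fin (I n))) :=
      {v | (∀ r n, ‖v r n‖ ≤ ρ) ∧
        ∀ s t : Fin R, s ≠ t → (inner ℝ (outer (v s)) (outer (v t)) : ℝ) = 0} with hD
    set F : (Fin R → (n : Fin N) → EuclideanSpace ℝ (Fin (I n))) →
        EuclideanSpace ℝ ((n : Fin N) → Fin (I n)) :=
      fun v => ∑ r, outer (v r) with hF
    have hFc : Continuous F :=
      continuous_finset_sum _ fun r _ => continuous_outer.comp (continuous_apply r)
    have hDclosed : IsClosed D := by
      have h1 : IsClosed {v : Fin R → (n : Fin N) → EuclideanSpace ℝ (Fin (I n)) |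
          ∀ r n, ‖v r n‖ ≤ ρ} := by
        have : {v : Fin R → (n : Fin N) → EuclideanSpace ℝ (Fin (I n)) |
            ∀ r n, ‖v r n‖ ≤ ρ} = ⋂ r, ⋂ n, {v | ‖v r n‖ ≤ ρ} := by
          ext v; simp [Set.mem_iInter]
        rw [this]
        refine isClosed_iInter fun r => isClosed_iInter fun n => ?_
        exact isClosed_le (((continuous_apply n).comp (continuous_apply r)).norm)
          continuous_const
      have h2 : IsClosed {v : Fin R → (n : Fin N) → EuclideanSpace ℝ (Fin (I n)) |
          ∀ s t : Fin R, s ≠ t → (inner ℝ (outer (v s)) (outer (v t)) : ℝ) = 0} := by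
        have : {v : Fin R → (n : Fin N) → EuclideanSpace ℝ (Fin (I n)) |
            ∀ s t : Fin R, s ≠ t → (inner ℝ (outer (v s)) (outer (v t)) : ℝ) = 0}
            = ⋂ s, ⋂ t, {v | s ≠ t → (inner ℝ (outer (v s)) (outer (v t)) : ℝ) = 0} := by
          ext v; simp [Set.mem_iInter]
        rw [this]
        refine isClosed_iInter fun s => isClosed_iInter fun t => ?_
        by_cases hst : s = t
        · simp [hst]
        · have : {v : Fin R → (n : Fin N) → EuclideanSpace ℝ (Fin (I n)) |
              s ≠ t → (inner ℝ (outer (v s)) (outer (v t)) : ℝ) = 0}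
              = {v | (inner ℝ (outer (v s)) (outer (v t)) : ℝ) = 0} := by
            ext v; simp [hst]
          rw [this]
          exact isClosed_eq ((continuous_outer.comp (continuous_apply s)).inner
            (continuous_outer.comp (continuous_apply t))) continuous_const
      rw [hD, Set.setOf_and]
      exact h1.inter h2
    have hDbdd : Bornology.IsBounded D := by
      refine Metric.isBounded_closedBall (x := (0 : Fin R → (n : Fin N) →
        EuclideanSpace ℝ (Fin (I n)))) (r := ρ) |>.subset fun v hv => ?_
      rw [Metric.mem_closedBall, dist_zero_right]
      refine pi_norm_le_iff_of_nonneg hρ0 |>.mpr fun r => ?_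
      exact pi_norm_le_iff_of_nonneg hρ0 |>.mpr fun n => hv.1 r n
    have hDcompact : IsCompact D := Metric.isCompact_of_isClosed_isBounded hDclosed hDbdd
    have hKcompact : IsCompact (F '' D) := hDcompact.image hFc
    have h0D : (0 : Fin R → (n : Fin N) → EuclideanSpace ℝ (Fin (I n))) ∈ D := by
      constructor
      · intro r n; simp [hρ0]
      · intro s t _
        rw [show outer ((0 : Fin R → (n : Fin N) → EuclideanSpace ℝ (Fin (I n))) s) = 0 from
          eq_zero_of_outer_comp _ ⟨0, hN⟩ rfl, inner_zero_left]
    have hF0 : F 0 = 0 := by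
      rw [hF]
      refine Finset.sum_eq_zero fun r _ => eq_zero_of_outer_comp _ ⟨0, hN⟩ rfl
    have hKne : (F '' D).Nonempty := ⟨F 0, Set.mem_image_of_mem F h0D⟩
    obtain ⟨B, hBK, hBmin⟩ := hKcompact.exists_isMinOn hKne
      (Continuous.continuousOn (show Continuous fun x => ‖A - x‖ from
        (continuous_const.sub continuous_id).norm))
    rw [isMinOn_iff] at hBmin
    -- membership criterion
    have hmemK : ∀ C : EuclideanSpace ℝ ((n : Fin N) → Fin (I n)),
        orank C ≤ R → ‖C‖ ≤ 2 * ‖A‖ → C ∈ F '' D := by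
      intro C hCR hCnorm
      obtain ⟨v, hv1, hv2⟩ := exists_decomp_exact hN C hCR
      choose w hw1 hw2 using fun r => exists_normalized hN (v r)
      refine ⟨w, ⟨?_, ?_⟩, ?_⟩
      · intro r n
        refine (hw2 r n).trans ?_
        have hterm : ‖outer (v r)‖ ≤ ‖C‖ := hv1 ▸ term_norm_le v hv2 r
        have : max 1 ‖outer (v r)‖ ≤ max 1 (2 * ‖A‖) :=
          max_le_max le_rfl (hterm.trans hCnorm)
        refine this.trans (max_le hρ1 (by rw [hρ]; linarith [norm_nonneg A]))
      · intro s t hst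
        rw [hw1 s, hw1 t]
        exact hv2 s t hst
      · show (∑ r, outer (w r)) = C
        rw [Finset.sum_congr rfl fun r _ => hw1 r]
        exact hv1.symm
    refine ⟨B, ?_, ?_⟩
    · obtain ⟨v, hvD, hvB⟩ := hBK
      have : R ∈ {R : ℕ | ∃ v : Fin R → (n : Fin N) → EuclideanSpace ℝ (Fin (I n)),
          B = ∑ r, outer (v r) ∧
          ∀ s t : Fin R, s ≠ t → (inner ℝ (outer (v s)) (outer (v t)) : ℝ) = 0} :=
        ⟨v, hvB.symm, hvD.2⟩
      exact Nat.sInf_le this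
    · intro C hC
      by_cases h : ‖A‖ ≤ ‖A - C‖
      · have h0 : ‖A - B‖ ≤ ‖A - F 0‖ := hBmin _ (Set.mem_image_of_mem F h0D)
        rw [hF0, sub_zero] at h0
        exact h0.trans h
      · push_neg at h
        have hCnorm : ‖C‖ ≤ 2 * ‖A‖ := by
          have h1 : ‖C‖ - ‖A‖ ≤ ‖C - A‖ := norm_sub_norm_le C A
          rw [norm_sub_rev] at h1
          linarith
        exact hBmin _ (hmemK C hC hCnorm)
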